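/- Let c, M > 0 and δ = M²/c, let b, g : J → ℝ be continuous on an interval J, and suppose x, y : J → ℝ are differentiable with y > 0 on J and satisfy x′ = b(t) x − c y² and y′ = −M² y + c x y − g(t). Define r = √((x/δ − 1)² + (y/δ)²) and z = (δ(r − 1) + x)/y. Then at every point of J where r > 0, the functions r and z are differentiable and satisfy r′ = b(t)( −R₂(z) + R₁(z)² (r − 1) ) − δ^{−1} R₃(z) g(t) and z′ = −M² r z + b(t) z ( −R₄(z) + r^{−1} − 1 ) + (2δ r)^{−1} R₅(z) g(t). -/

import Mathlib

open Set

noncomputable section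

/-- `R₁(z) = (z²-1)/(z²+1)`. -/
def R1 (z : ℝ) : ℝ := (z ^ 2 - 1) / (z ^ 2 + 1)

/-- `R₂(z) = -2z²(z²-1)/(z²+1)²`. -/
def R2 (z : ℝ) : ℝ := -(2 * z ^ 2 * (z ^ 2 - 1)) / (z ^ 2 + 1) ^ 2

/-- `R₃(z) = 2z/(z²+1)`. -/
def R3 (z : ℝ) : ℝ := 2 * z / (z ^ 2 + 1)

/-- `R₄(z) = -2z²/(z²+1)`. -/
def R4 (z : ℝ) : ℝ := -(2 * z ^ 2) / (z ^ 2 + 1)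

/-- `R₅(z) = z²-1`. -/
def R5 (z : ℝ) : ℝ := z ^ 2 - 1

/-- The good unknown `r` of the binary system. -/
def rVar (δ : ℝ) (x y : ℝ → ℝ) (t : ℝ) : ℝ :=
  Real.sqrt ((x t / δ - 1) ^ 2 + (y t / δ) ^ 2)

/-- The good unknown `z` of the binary system. -/
def zVar (δ : ℝ) (x y : ℝ → ℝ) (t : ℝ) : ℝ :=
  (δ * (rVar δ x y t - 1) + x t) / y t

lemma Rvals (u v R : ℝ) (hR : 0 < R) (hv : 0 < v) (hp : 0 < u + R)
    (hsum : u ^ 2 + v ^ 2 = R ^ 2) :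
    R1 ((u + R) / v) = u / R ∧ R2 ((u + R) / v) = -(u * (u + R)) / R ^ 2 ∧
      R3 ((u + R) / v) = v / R ∧ R4 ((u + R) / v) = -((u + R) / R) ∧
      R5 ((u + R) / v) = 2 * u * (u + R) / v ^ 2 := by
  have h1 : ((u + R) / v) ^ 2 + 1 = 2 * R * (u + R) / v ^ 2 := by
    field_simp
    linear_combination hsum
  have h2 : ((u + R) / v) ^ 2 - 1 = 2 * u * (u + R) / v ^ 2 := by
    field_simp
    linear_combination -hsum
  have h3 : ((u + R) / v) ^ 2 = (u + R) ^ 2 / v ^ 2 := by ring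
  refine ⟨?_, ?_, ?_, ?_, ?_⟩
  · rw [R1, h1, h2]
    field_simp
  · rw [R2, h1, h2, h3]
    field_simp
  · rw [R3, h1]
    field_simp
  · rw [R4, h1, h3]
    field_simp
  · rw [R5, h2]

/-- The equations satisfied by the good unknowns of the binary subsystem with
drift `b` and force `g`. -/
theorem good_unknowns_equations (c M δ : ℝ) (hc : 0 < c) (hM : 0 < M)
    (hδ : δ = M ^ 2 / c) (J : Set ℝ) (hJ : Convex ℝ J) (b g x y : ℝ → ℝ)
    (hb : ContinuousOn b J) (hg : ContinuousOn g J)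
    (hypos : ∀ t ∈ J, 0 < y t)
    (hx : ∀ t ∈ J, HasDerivWithinAt x (b t * x t - c * (y t) ^ 2) J t)
    (hy : ∀ t ∈ J, HasDerivWithinAt y (-(M ^ 2) * y t + c * x t * y t - g t) J t) :
    ∀ t ∈ J, 0 < rVar δ x y t →
      HasDerivWithinAt (rVar δ x y)
        (b t * (-(R2 (zVar δ x y t)) + R1 (zVar δ x y t) ^ 2 * (rVar δ x y t - 1))
          - δ⁻¹ * R3 (zVar δ x y t) * g t) J t ∧
      HasDerivWithinAt (zVar δ x y)
        (-(M ^ 2) * rVar δ x y t * zVar δ x y t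
          + b t * zVar δ x y t * (-(R4 (zVar δ x y t)) + (rVar δ x y t)⁻¹ - 1)
          + (2 * δ * rVar δ x y t)⁻¹ * R5 (zVar δ x y t) * g t) J t := by
  intro t ht hr
  have hδpos : 0 < δ := hδ ▸ div_pos (pow_pos hM 2) hc
  have hY : 0 < y t := hypos t ht
  have hcδ : c * δ = M ^ 2 := by rw [hδ]; field_simp
  -- derivative of the inside of the square root
  have hs : HasDerivWithinAt (fun τ => (x τ / δ - 1) ^ 2 + (y τ / δ) ^ 2)
      (2 * (x t / δ - 1) * ((b t * x t - c * (y t) ^ 2) / δ)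
        + 2 * (y t / δ) * ((-(M ^ 2) * y t + c * x t * y t - g t) / δ)) J t := by
    have h1 := (((hx t ht).div_const δ).sub_const 1).pow 2
    have h2 := ((hy t ht).div_const δ).pow 2
    convert h1.add h2 using 1
    · rfl
    · rfl
    · rfl
    push_cast
    ring
  have hspos : 0 < (x t / δ - 1) ^ 2 + (y t / δ) ^ 2 :=
    Real.sqrt_pos.mp hr
  have hrd := hs.sqrt hspos.ne'
  set u : ℝ := x t / δ - 1 with hu
  set v : ℝ := y t / δ with hv
  set R : ℝ := rVar δ x y t with hRdef
  have hR2 : u ^ 2 + v ^ 2 = R ^ 2 := by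
    rw [hRdef]
    exact (Real.sq_sqrt hspos.le).symm
  have hvpos : 0 < v := div_pos hY hδpos
  have hup : 0 < u + R := by nlinarith [hr, hvpos, hR2, sq_nonneg (u + R)]
  have hsqrt : Real.sqrt (u ^ 2 + v ^ 2) = R := by rw [hRdef]; rfl
  have hXu : x t = δ * (u + 1) := by rw [hu]; field_simp; ring
  have hYv : y t = δ * v := by rw [hv]; field_simp
  have hZ : zVar δ x y t = (u + R) / v := by
    rw [zVar, ← hRdef, hXu, hYv]
    rw [div_eq_div_iff (by positivity) hvpos.ne']
    ring
  obtain ⟨e1, e2, e3, e4, e5⟩ := Rvals u v R hr hvpos hup hR2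
  -- the r equation
  have hr1 : HasDerivWithinAt (rVar δ x y)
      (b t * (-(R2 (zVar δ x y t)) + R1 (zVar δ x y t) ^ 2 * (rVar δ x y t - 1))
        - δ⁻¹ * R3 (zVar δ x y t) * g t) J t := by
    convert hrd using 1
    · rfl
    rw [hZ, e1, e2, e3, hXu, hYv, hsqrt, ← hRdef]
    clear_value u v R
    rw [← hcδ]
    field_simp [hδpos.ne', hvpos.ne', hr.ne', hup.ne']
    ring
  refine ⟨hr1, ?_⟩
  -- the z equation
  have hnum : HasDerivWithinAt (fun τ => δ * (rVar δ x y τ - 1) + x τ)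
      (δ * (b t * (-(R2 (zVar δ x y t)) + R1 (zVar δ x y t) ^ 2 * (rVar δ x y t - 1))
        - δ⁻¹ * R3 (zVar δ x y t) * g t) + (b t * x t - c * (y t) ^ 2)) J t :=
    ((hr1.sub_const 1).const_mul δ).add (hx t ht)
  have hzd := hnum.div (hy t ht) hY.ne'
  convert hzd using 1
  · rfl
  · rfl
  · rfl
  rw [hZ, e1, e2, e3, e4, e5, hXu, hYv, ← hRdef]
  clear_value u v R
  rw [← hcδ]
  field_simp [hδpos.ne', hvpos.ne', hr.ne', hup.ne']
  linear_combination (R * g t + c * δ ^ 2 * v * R ^ 2) * hR2
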